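/- In the same three-class counter-example with logits r_y(δ)=3δ, r_z(δ)=2δ, r₃(δ)=-10δ and softmax probabilities, the target-class probability p_z(δ) = exp(2δ)/(exp(3δ)+exp(2δ)+exp(-10δ)) attains its maximum over [-ε,ε] at some δ* with δ* > -ε; in particular the maximizer of p_z differs from the maximizer -ε of the cross-entropy loss -log(p_y) whenever ε > 0. -/
import Mathlib


noncomputable def pz (δ : ℝ) : ℝ :=
  Real.exp (2 * δ) /
    (Real.exp (3 * δ) + Real.exp (2 * δ) + Real.exp (-10 * δ))

theorem pz_max_interior (ε : ℝ) (hε : 0 < ε) :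
    ∃ δstar ∈ Set.Icc (-ε) ε,
      IsMaxOn pz (Set.Icc (-ε) ε) δstar ∧ -ε < δstar := by
  have hden : ∀ x : ℝ, 0 < Real.exp (3 * x) + Real.exp (2 * x) + Real.exp (-10 * x) := by
    intro x
    positivity
  have hcont : Continuous pz := by
    unfold pz
    exact Continuous.div (by continuity) (by continuity) (fun x => ne_of_gt (hden x))
  obtain ⟨δstar, hmem, hmax⟩ :=
    isCompact_Icc.exists_isMaxOn (Set.nonempty_Icc.mpr (by linarith : -ε ≤ ε)) hcont.continuousOn
  refine ⟨δstar, hmem, hmax, ?_⟩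
  have h0 : (0:ℝ) ∈ Set.Icc (-ε) ε := ⟨by linarith, le_of_lt hε⟩
  have hlt : pz (-ε) < pz 0 := by
    unfold pz
    have h1 : Real.exp (2 * (0:ℝ)) / (Real.exp (3 * (0:ℝ)) + Real.exp (2 * (0:ℝ)) + Real.exp (-10 * (0:ℝ))) = 1/3 := by
      norm_num
    rw [h1, div_lt_div_iff₀ (hden (-ε)) (by norm_num)]
    have e1 : Real.exp (-10 * -ε) = Real.exp (2 * -ε) * Real.exp (12 * ε) := by
      rw [← Real.exp_add]; ring_nf
    have e2 : Real.exp (3 * -ε) = Real.exp (2 * -ε) * Real.exp (-ε) := by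
      rw [← Real.exp_add]; ring_nf
    have b1 : 1 + 12 * ε < Real.exp (12 * ε) := by
      have := Real.add_one_lt_exp (by positivity : (12:ℝ) * ε ≠ 0)
      linarith
    have b2 : 1 - ε ≤ Real.exp (-ε) := by
      have := Real.add_one_le_exp (-ε)
      linarith
    have b3 : 0 < Real.exp (2 * -ε) := Real.exp_pos _
    nlinarith [b3, b1, b2]
  by_contra h
  push_neg at h
  have heq : δstar = -ε := le_antisymm h hmem.1
  have := hmax h0
  simp only [heq, Set.mem_setOf_eq] at this
  linarith
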